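/- arXiv:1812.04762 — 2 statements merged into one kernel-verified Lean document; each statement's English description precedes it below -/
import Mathlib

section
/- In the Golub–Kahan bidiagonalization setup, for every k with 1 ≤ k ≤ n−1 one has the identity γ_k^{cgme} = ‖(β_{k+1}e_1, G_k)‖, i.e., the spectral-norm error ‖(I_m − P_k P_kᵀ)A‖ equals the spectral norm of the (n−k+1)×(n−k+1) matrix obtained by prepending the column β_{k+1}e_1 to G_k. -/
/-!
Write `P_k = P E` with `E` the first `k` columns of the identity. Since `Pᵀ P = I`,
`(I - P_k P_kᵀ) A = P (I - E Eᵀ) B Qᵀ`, and multiplying by matrices with orthonormal columns does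
not change the spectral norm, so `γ_k = ‖(I - E Eᵀ) B‖`. The matrix `(I - E Eᵀ) B` is `B` with its
first `k` rows zeroed; as `B` is lower bidiagonal, its nonzero entries lie in rows `k+1, …, n+1`
and columns `k, …, n`, and this block is `(β_{k+1} e₁, G_k)`. A block padded with zero rows and
columns has the spectral norm of the block, because the padding is a product with selection
matrices, which have orthonormal columns.
-/

open Matrix

/-- Spectral norm (largest singular value) of a real matrix. -/
noncomputable def specNorm {a b : ℕ} (M : Matrix (Fin a) (Fin b) ℝ) : ℝ :=
  ‖LinearMap.toContinuousLinearMap (Matrix.toEuclideanLin M)‖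

/-- The `j`-th largest singular value of a real matrix (`j ≥ 1`), characterized via the
Eckart–Young theorem as the minimal spectral-norm distance to matrices of rank `< j`;
it is `0` when `j` exceeds the smaller dimension. -/
noncomputable def singVal {a b : ℕ} (M : Matrix (Fin a) (Fin b) ℝ) (j : ℕ) : ℝ :=
  sInf {r : ℝ | ∃ D : Matrix (Fin a) (Fin b) ℝ, D.rank < j ∧ r = specNorm (M - D)}

/-- The matrix of the first `k` columns of `M`. -/
def colSub {a b : ℕ} (M : Matrix (Fin a) (Fin b) ℝ) (k : ℕ) (hk : k ≤ b) :
    Matrix (Fin a) (Fin k) ℝ :=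
  M.submatrix id fun j => ⟨j.1, lt_of_lt_of_le j.2 hk⟩

/-- The leading `r × c` submatrix of `M`. -/
def subUL {a b : ℕ} (M : Matrix (Fin a) (Fin b) ℝ) (r c : ℕ) (hr : r ≤ a) (hc : c ≤ b) :
    Matrix (Fin r) (Fin c) ℝ :=
  M.submatrix (fun i => ⟨i.1, lt_of_lt_of_le i.2 hr⟩) (fun j => ⟨j.1, lt_of_lt_of_le j.2 hc⟩)

open scoped Matrix.Norms.L2Operator

namespace Matrix

section SelectCols

def selectCols (α : Type*) [Zero α] [One α] {m ι : Type*} [DecidableEq m] (f : ι → m) :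
    Matrix m ι α :=
  (1 : Matrix m m α).submatrix id f

variable {α : Type*} [Semiring α] {l m n ι : Type*} [DecidableEq m]

lemma conjTranspose_selectCols [StarRing α] (f : ι → m) :
    (selectCols α f)ᴴ = (1 : Matrix m m α).submatrix f id := by
  rw [selectCols, conjTranspose_submatrix, conjTranspose_one]

variable [Fintype m]

lemma mul_selectCols (X : Matrix l m α) (f : ι → m) : X * selectCols α f = X.submatrix id f := by
  ext i j
  simp [selectCols, mul_apply, one_apply]

variable [StarRing α]

lemma conjTranspose_selectCols_mul (f : ι → m) (X : Matrix m n α) :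
    (selectCols α f)ᴴ * X = X.submatrix f id := by
  ext i j
  simp [conjTranspose_selectCols, mul_apply, one_apply]

variable [DecidableEq ι] {f : ι → m}

lemma conjTranspose_selectCols_mul_self (hf : Function.Injective f) :
    (selectCols α f)ᴴ * selectCols α f = 1 := by
  rw [conjTranspose_selectCols_mul, selectCols, submatrix_submatrix, Function.id_comp,
    Function.comp_id, submatrix_one f hf]

variable [Fintype ι]

lemma selectCols_mul_conjTranspose_mul_apply (hf : Function.Injective f) (X : Matrix m n α)
    (i : m) (j : n) :
    (selectCols α f * (selectCols α f)ᴴ * X) i j = if i ∈ Set.range f then X i j else 0 := by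
  rw [Matrix.mul_assoc, conjTranspose_selectCols_mul]
  split_ifs with hi
  · obtain ⟨p, rfl⟩ := hi
    simp [selectCols, mul_apply, one_apply, hf.eq_iff]
  · simp only [selectCols, mul_apply, submatrix_apply, id_eq, one_apply]
    exact Finset.sum_eq_zero fun p _ => by simp [show i ≠ f p from fun h => hi ⟨p, h.symm⟩]

lemma mul_selectCols_mul_conjTranspose_apply (hf : Function.Injective f) (X : Matrix l m α)
    (i : l) (j : m) :
    (X * selectCols α f * (selectCols α f)ᴴ) i j = if j ∈ Set.range f then X i j else 0 := by
  rw [mul_selectCols, conjTranspose_selectCols]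
  split_ifs with hj
  · obtain ⟨q, rfl⟩ := hj
    simp [mul_apply, one_apply, hf.eq_iff]
  · simp only [mul_apply, submatrix_apply, id_eq, one_apply]
    exact Finset.sum_eq_zero fun q _ => by simp [show f q ≠ j from fun h => hj ⟨q, h⟩]

end SelectCols

lemma one_sub_mul_mul_conjTranspose_mul {α : Type*} [Ring α] [StarRing α]
    {l m ι : Type*} [Fintype l] [Fintype m] [DecidableEq m] [Fintype ι] [DecidableEq l]
    {U : Matrix l m α} (hU : Uᴴ * U = 1) (S : Matrix m ι α) :
    (1 - U * S * (U * S)ᴴ) * U = U * (1 - S * Sᴴ) := by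
  rw [conjTranspose_mul, Matrix.sub_mul, Matrix.mul_sub, Matrix.one_mul, Matrix.mul_one]
  simp only [Matrix.mul_assoc]
  rw [hU, Matrix.mul_one]

section L2OpNorm

variable {𝕜 : Type*} [RCLike 𝕜] {l m n ι κ : Type*} [Fintype l] [Fintype m] [Fintype n]
  [DecidableEq m] [DecidableEq n]

lemma l2_opNorm_mul_of_conjTranspose_mul_self_eq_one {U : Matrix l m 𝕜}
    (hU : Uᴴ * U = 1) (X : Matrix m n 𝕜) : ‖U * X‖ = ‖X‖ := by
  have h := l2_opNorm_conjTranspose_mul_self (U * X)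
  rw [conjTranspose_mul, Matrix.mul_assoc, ← Matrix.mul_assoc Uᴴ, hU, Matrix.one_mul,
    l2_opNorm_conjTranspose_mul_self] at h
  exact (mul_self_inj (norm_nonneg _) (norm_nonneg _)).mp h.symm

lemma l2_opNorm_mul_conjTranspose_of_conjTranspose_mul_self_eq_one [DecidableEq l]
    {U : Matrix l m 𝕜} (hU : Uᴴ * U = 1) (X : Matrix n m 𝕜) : ‖X * Uᴴ‖ = ‖X‖ := by
  rw [← l2_opNorm_conjTranspose, conjTranspose_mul, conjTranspose_conjTranspose,
    l2_opNorm_mul_of_conjTranspose_mul_self_eq_one hU, l2_opNorm_conjTranspose]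

lemma l2_opNorm_submatrix_of_eq_zero [Fintype ι] [DecidableEq ι] [Fintype κ] [DecidableEq κ]
    {f : ι → m} {g : κ → n} (hf : Function.Injective f) (hg : Function.Injective g)
    (Z : Matrix m n 𝕜) (hrow : ∀ i ∉ Set.range f, ∀ j, Z i j = 0)
    (hcol : ∀ j ∉ Set.range g, ∀ i, Z i j = 0) : ‖Z.submatrix f g‖ = ‖Z‖ := by
  have hZ : selectCols 𝕜 f * (selectCols 𝕜 f)ᴴ * Z *
      selectCols 𝕜 g * (selectCols 𝕜 g)ᴴ = Z := by
    ext i j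
    rw [mul_selectCols_mul_conjTranspose_apply hg, selectCols_mul_conjTranspose_mul_apply hf]
    split_ifs with hj hi
    · rfl
    · exact (hrow i hi j).symm
    · exact (hcol j hj i).symm
  have hsub : Z.submatrix f g = (selectCols 𝕜 f)ᴴ * Z * selectCols 𝕜 g := by
    rw [conjTranspose_selectCols_mul, mul_selectCols, submatrix_submatrix, Function.id_comp,
      Function.comp_id]
  calc ‖Z.submatrix f g‖
      = ‖selectCols 𝕜 f * Z.submatrix f g * (selectCols 𝕜 g)ᴴ‖ := by
        rw [l2_opNorm_mul_conjTranspose_of_conjTranspose_mul_self_eq_one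
            (conjTranspose_selectCols_mul_self hg),
          l2_opNorm_mul_of_conjTranspose_mul_self_eq_one (conjTranspose_selectCols_mul_self hf)]
    _ = ‖Z‖ := by
      conv_rhs => rw [← hZ]
      rw [hsub]
      simp only [Matrix.mul_assoc]

end L2OpNorm

end Matrix

lemma colSub_eq_mul_selectCols {a b : ℕ} (M : Matrix (Fin a) (Fin b) ℝ) (k : ℕ) (hk : k ≤ b) :
    colSub M k hk = M * selectCols ℝ (Fin.castLE hk) :=
  (mul_selectCols M _).symm

lemma specNorm_eq_l2_opNorm {a b : ℕ} (M : Matrix (Fin a) (Fin b) ℝ) : specNorm M = ‖M‖ := rfl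

lemma one_sub_selectCols_castLE_mul_apply {𝕜 : Type*} [RCLike 𝕜] {a k : ℕ} {n : Type*}
    (hk : k ≤ a) (B : Matrix (Fin a) n 𝕜) (i : Fin a) (j : n) :
    ((1 - selectCols 𝕜 (Fin.castLE hk) * (selectCols 𝕜 (Fin.castLE hk))ᴴ :
      Matrix (Fin a) (Fin a) 𝕜) * B) i j = if (i : ℕ) < k then 0 else B i j := by
  rw [Matrix.sub_mul, Matrix.one_mul, Matrix.sub_apply,
    selectCols_mul_conjTranspose_mul_apply (Fin.castLE_injective hk)]
  simp only [Fin.range_castLE, Set.mem_ofPred_eq]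
  split_ifs <;> simp

lemma l2_opNorm_one_sub_selectCols_castLE_mul {𝕜 : Type*} [RCLike 𝕜] {n k : ℕ} (hk1 : 1 ≤ k)
    (hkn : k ≤ n) (B : Matrix (Fin (n + 1)) (Fin n) 𝕜)
    (hB : ∀ (i : Fin (n + 1)) (j : Fin n), (j : ℕ) + 1 < i → B i j = 0) :
    ‖(1 - selectCols 𝕜 (Fin.castLE (Nat.le_succ_of_le hkn)) *
        (selectCols 𝕜 (Fin.castLE (Nat.le_succ_of_le hkn)))ᴴ) * B‖ =
      ‖B.submatrix (fun p : Fin (n - k + 1) => (⟨k + p, by omega⟩ : Fin (n + 1)))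
        (fun q : Fin (n - k + 1) => (⟨k + q - 1, by omega⟩ : Fin n))‖ := by
  set f : Fin (n - k + 1) → Fin (n + 1) := fun p => ⟨k + p, by omega⟩
  set g : Fin (n - k + 1) → Fin n := fun q => ⟨k + q - 1, by omega⟩
  have hZ := one_sub_selectCols_castLE_mul_apply (𝕜 := 𝕜) (Nat.le_succ_of_le hkn) B
  set Z := (1 - selectCols 𝕜 (Fin.castLE (Nat.le_succ_of_le hkn)) *
    (selectCols 𝕜 (Fin.castLE (Nat.le_succ_of_le hkn)))ᴴ) * B
  have hf : Function.Injective f := fun p q h => by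
    simpa [f, Fin.ext_iff] using h
  have hg : Function.Injective g := fun p q h => by
    simp only [g, Fin.mk.injEq] at h
    omega
  have hrow : ∀ i ∉ Set.range f, ∀ j, Z i j = 0 := by
    intro i hi j
    rw [hZ, if_pos]
    by_contra h
    exact hi ⟨⟨i - k, by omega⟩, by ext; simp [f]; omega⟩
  have hcol : ∀ j ∉ Set.range g, ∀ i, Z i j = 0 := by
    intro j hj i
    rw [hZ, ite_eq_left_iff]
    refine fun hi => hB i j ?_
    by_contra h
    exact hj ⟨⟨j + 1 - k, by omega⟩, by ext; simp [g]; omega⟩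
  rw [← l2_opNorm_submatrix_of_eq_zero hf hg Z hrow hcol]
  congr 1
  ext p q
  rw [submatrix_apply, hZ, if_neg (by simp [f]), submatrix_apply]

/-- `γ_k^{cgme} = ‖(β_{k+1} e₁, G_k)‖` for `1 ≤ k ≤ n-1`, where `G_k` is the
trailing submatrix of `B` with rows `k+1,…,n+1` and columns `k+1,…,n` (1-based), and the
column `β_{k+1} e₁` is prepended to it. -/
theorem cgme_rank_k_error_eq_norm_augmented_trailing_matrix
    (m n : ℕ)
    (A : Matrix (Fin m) (Fin n) ℝ)
    (P : Matrix (Fin m) (Fin (n + 1)) ℝ) (hP : Pᵀ * P = 1)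
    (Q : Matrix (Fin n) (Fin n) ℝ) (hQ : Qᵀ * Q = 1)
    (α : Fin n → ℝ)
    (β : Fin n → ℝ)
    (B : Matrix (Fin (n + 1)) (Fin n) ℝ)
    (hB : ∀ (i : Fin (n + 1)) (j : Fin n),
      B i j = if (i : ℕ) = (j : ℕ) then α j
        else if (i : ℕ) = (j : ℕ) + 1 then β j else 0)
    (hA : A = P * B * Qᵀ)
    (k : ℕ) (hk1 : 1 ≤ k) (hk2 : k ≤ n - 1)
    (M : Matrix (Fin (n - k + 1)) (Fin (n - k + 1)) ℝ)
    (hM : ∀ (i j : Fin (n - k + 1)),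
      M i j = if (j : ℕ) = 0 then
          (if (i : ℕ) = 0 then B ⟨k, by omega⟩ ⟨k - 1, by omega⟩ else 0)
        else B ⟨k + (i : ℕ), by have := i.2; omega⟩ ⟨k + (j : ℕ) - 1, by have := j.2; omega⟩) :
    specNorm ((1 - colSub P k (by omega) * (colSub P k (by omega))ᵀ) * A) = specNorm M := by
  have hB_zero : ∀ (i : Fin (n + 1)) (j : Fin n), (j : ℕ) + 1 < i → B i j = 0 := fun i j h => by
    rw [hB, if_neg (by omega), if_neg (by omega)]
  have hM_eq : M = B.submatrix (fun p : Fin (n - k + 1) => (⟨k + p, by omega⟩ : Fin (n + 1)))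
      (fun q : Fin (n - k + 1) => (⟨k + q - 1, by omega⟩ : Fin n)) := by
    ext p q
    rw [hM, submatrix_apply]
    split_ifs with hq hp
    · congr <;> simp [hp, hq]
    · exact (hB_zero _ _ (by simp; omega)).symm
    · rfl
  rw [← conjTranspose_eq_transpose_of_trivial] at hP hQ
  have hk : k ≤ n + 1 := by omega
  calc specNorm ((1 - colSub P k hk * (colSub P k hk)ᵀ) * A)
      = ‖P * ((1 - selectCols ℝ (Fin.castLE hk) * (selectCols ℝ (Fin.castLE hk))ᴴ) * B) * Qᴴ‖ := by
        rw [specNorm_eq_l2_opNorm, colSub_eq_mul_selectCols,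
          ← conjTranspose_eq_transpose_of_trivial, hA, ← conjTranspose_eq_transpose_of_trivial Q,
          ← Matrix.mul_assoc, ← Matrix.mul_assoc, one_sub_mul_mul_conjTranspose_mul hP,
          Matrix.mul_assoc P]
    _ = ‖(1 - selectCols ℝ (Fin.castLE hk) * (selectCols ℝ (Fin.castLE hk))ᴴ) * B‖ := by
        rw [l2_opNorm_mul_conjTranspose_of_conjTranspose_mul_self_eq_one hQ,
          l2_opNorm_mul_of_conjTranspose_mul_self_eq_one hP]
    _ = specNorm M := by
        rw [l2_opNorm_one_sub_selectCols_castLE_mul hk1 (by omega) B hB_zero, hM_eq]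
        rfl
end

section
/- Let k ≥ 1, let B_k ∈ ℝ^{(k+1)×k} be lower bidiagonal with (B_k)_{ii} = α_i > 0 (1 ≤ i ≤ k), (B_k)_{i+1,i} = β_{i+1} > 0 (1 ≤ i ≤ k), and all other entries zero, let α_{k+1} > 0, and let B̄_{k+1} := (B_k, α_{k+1} e_{k+1}) ∈ ℝ^{(k+1)×(k+1)} be the matrix obtained by appending to B_k the column α_{k+1} e_{k+1}, where e_{k+1} is the last standard basis vector of ℝ^{k+1}. Then the singular values θ̄_1^{(k+1)} > ⋯ > θ̄_{k+1}^{(k+1)} of B̄_{k+1} and the singular values θ_1^{(k)} > ⋯ > θ_k^{(k)} of B_k strictly interlace: θ̄_1^{(k+1)} > θ_1^{(k)} > θ̄_2^{(k+1)} > θ_2^{(k)} > ⋯ > θ̄_k^{(k+1)} > θ_k^{(k)} > θ̄_{k+1}^{(k+1)}. -/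
open Matrix

/-!
By the Eckart–Young theorem, `singVal M j` is the `j`-th singular value of `M`, the square root of
the `j`-th largest eigenvalue of `MᵀM`. Deleting the last column of `B̄` is right multiplication by
a matrix `S` with orthonormal columns, and `1 - S Sᵀ` has rank one; transporting best
approximations of rank `< j` along `S` and `Sᵀ` gives the weak interlacing `θᵢ ≤ θ̄ᵢ` and
`θ̄ᵢ₊₁ ≤ θᵢ`.

For strictness, `T = B̄ᵀB̄` is an unreduced tridiagonal matrix whose leading principal submatrix is
`B_kᵀB_k`, and an equality of singular values would give a common eigenvalue `μ`. An eigenvector of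
an unreduced Hessenberg matrix cannot vanish in its last coordinate, yet if `T w = μ w` and
`B_kᵀB_k v = μ v`, pairing `w` with `v` padded by a zero and using the symmetry of `T` gives
`T_{k+1,k} v_k w_{k+1} = 0`.
-/

open Module InnerProductSpace
open scoped Matrix.Norms.L2Operator

namespace LinearMap

variable {𝕜 : Type*} [RCLike 𝕜]
  {E : Type*} [NormedAddCommGroup E] [InnerProductSpace 𝕜 E] [FiniteDimensional 𝕜 E]
  {F : Type*} [NormedAddCommGroup F] [InnerProductSpace 𝕜 F] [FiniteDimensional 𝕜 F]
  (T : E →ₗ[𝕜] F)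

noncomputable def rightSingularVectors : OrthonormalBasis (Fin (finrank 𝕜 E)) 𝕜 E :=
  T.isSymmetric_adjoint_comp_self.eigenvectorBasis rfl

theorem norm_apply_sq_eq_sum (x : E) :
    ‖T x‖ ^ 2 = ∑ l : Fin (finrank 𝕜 E),
      T.singularValues l ^ 2 * ‖T.rightSingularVectors.repr x l‖ ^ 2 := by
  have h : (‖T x‖ ^ 2 : 𝕜) = ⟪x, (adjoint T ∘ₗ T) x⟫_𝕜 := by
    rw [comp_apply, adjoint_inner_right, inner_self_eq_norm_sq_to_K]
  rw [← T.rightSingularVectors.repr.inner_map_map, PiLp.inner_apply] at h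
  apply RCLike.ofReal_injective (K := 𝕜)
  push_cast
  rw [h]
  refine Finset.sum_congr rfl fun l _ => ?_
  rw [rightSingularVectors, T.isSymmetric_adjoint_comp_self.eigenvectorBasis_apply_self_apply,
    ← sq_singularValues_fin T rfl, RCLike.inner_apply, mul_assoc, RCLike.mul_conj]
  push_cast
  ring

theorem norm_apply_le_of_repr_eq_zero {i : ℕ} {x : E}
    (hx : ∀ l : Fin (finrank 𝕜 E), (l : ℕ) < i → T.rightSingularVectors.repr x l = 0) :
    ‖T x‖ ≤ T.singularValues i * ‖x‖ := by
  rw [← pow_le_pow_iff_left₀ (norm_nonneg _)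
    (mul_nonneg (T.singularValues_nonneg i) (norm_nonneg x)) two_ne_zero, norm_apply_sq_eq_sum,
    mul_pow, ← T.rightSingularVectors.repr.norm_map, EuclideanSpace.norm_sq_eq, Finset.mul_sum]
  refine Finset.sum_le_sum fun l _ => ?_
  by_cases hl : (l : ℕ) < i
  · simp [hx l hl]
  · gcongr
    exacts [T.singularValues_nonneg _, T.singularValues_antitone (not_lt.mp hl)]

theorem le_norm_apply_of_repr_eq_zero {i : ℕ} {x : E}
    (hx : ∀ l : Fin (finrank 𝕜 E), i < l → T.rightSingularVectors.repr x l = 0) :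
    T.singularValues i * ‖x‖ ≤ ‖T x‖ := by
  rw [← pow_le_pow_iff_left₀ (mul_nonneg (T.singularValues_nonneg i) (norm_nonneg x))
    (norm_nonneg _) two_ne_zero, norm_apply_sq_eq_sum, mul_pow,
    ← T.rightSingularVectors.repr.norm_map, EuclideanSpace.norm_sq_eq, Finset.mul_sum]
  refine Finset.sum_le_sum fun l _ => ?_
  by_cases hl : i < (l : ℕ)
  · simp [hx l hl]
  · gcongr
    exacts [T.singularValues_nonneg _, T.singularValues_antitone (not_lt.mp hl)]

theorem exists_finrank_range_le_opNorm_sub_le (i : ℕ) :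
    ∃ D : E →ₗ[𝕜] F, finrank 𝕜 (range D) ≤ i ∧
      ‖toContinuousLinearMap (T - D)‖ ≤ T.singularValues i := by
  classical
  set S : Finset (Fin (finrank 𝕜 E)) := {l | l < i}
  -- `T ∘ₗ P` is the truncated singular value decomposition of `T`.
  set P : E →ₗ[𝕜] E :=
    ∑ l ∈ S, (innerₛₗ 𝕜 (T.rightSingularVectors l)).smulRight (T.rightSingularVectors l)
  have hcoord : ∀ x l, T.rightSingularVectors.repr (x - P x) l =
      if l ∈ S then 0 else T.rightSingularVectors.repr x l := by
    intro x l
    by_cases hl : l ∈ S <;>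
      simp [P, hl, OrthonormalBasis.repr_self, OrthonormalBasis.repr_apply_apply, Pi.single_apply]
  refine ⟨T ∘ₗ P, ?_, ContinuousLinearMap.opNorm_le_bound _ (T.singularValues_nonneg i) fun x => ?_⟩
  · have hrange : range (T ∘ₗ P) ≤
        Submodule.span 𝕜 (S.image fun l => T (T.rightSingularVectors l)) := by
      rintro _ ⟨x, rfl⟩
      simp only [P, comp_apply, sum_apply, smulRight_apply, map_sum, map_smul]
      exact sum_mem fun l hl => Submodule.smul_mem _ _
        (Submodule.subset_span (Finset.mem_image_of_mem _ hl))
    calc finrank 𝕜 (range (T ∘ₗ P)) ≤ (S.image fun l => T (T.rightSingularVectors l)).card :=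
          (Submodule.finrank_mono hrange).trans (finrank_span_finset_le_card _)
      _ ≤ S.card := Finset.card_image_le
      _ ≤ i := by simp [S, Fin.card_filter_val_lt]
  · have hnorm : ‖x - P x‖ ≤ ‖x‖ := by
      rw [← T.rightSingularVectors.repr.norm_map, ← T.rightSingularVectors.repr.norm_map x,
        EuclideanSpace.norm_eq, EuclideanSpace.norm_eq]
      gcongr with l
      rw [hcoord]
      split_ifs <;> simp
    calc ‖toContinuousLinearMap (T - T ∘ₗ P) x‖ = ‖T (x - P x)‖ := by simp
      _ ≤ T.singularValues i * ‖x - P x‖ :=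
          T.norm_apply_le_of_repr_eq_zero fun l hl => by rw [hcoord, if_pos (by simpa [S] using hl)]
      _ ≤ T.singularValues i * ‖x‖ := mul_le_mul_of_nonneg_left hnorm (T.singularValues_nonneg i)

theorem singularValues_le_opNorm_sub {D : E →ₗ[𝕜] F} {i : ℕ} (hD : finrank 𝕜 (range D) ≤ i) :
    T.singularValues i ≤ ‖toContinuousLinearMap (T - D)‖ := by
  rcases le_or_gt (finrank 𝕜 E) i with hi | hi
  · rw [T.singularValues_of_finrank_le hi]
    exact norm_nonneg _
  set V := Submodule.span 𝕜 (Set.range (T.rightSingularVectors ∘ Fin.castLE hi))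
  have hV : finrank 𝕜 V = i + 1 := by
    rw [finrank_span_eq_card (T.rightSingularVectors.orthonormal.linearIndependent.comp _
      (Fin.castLE_injective hi)), Fintype.card_fin]
  -- `finrank V > finrank (range D)`, so `D` kills some nonzero `x ∈ V`.
  obtain ⟨⟨x, hxV⟩, hDx, hx0⟩ := Submodule.exists_mem_ne_zero_of_ne_bot
    (ker_ne_bot_of_finrank_lt (f := D.rangeRestrict ∘ₗ V.subtype) (by omega))
  have hcoord : ∀ l : Fin (finrank 𝕜 E), i < l → T.rightSingularVectors.repr x l = 0 := by
    intro l hl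
    have hV_le : V ≤ ker (innerₛₗ 𝕜 (T.rightSingularVectors l)) := by
      refine Submodule.span_le.mpr ?_
      rintro _ ⟨m, rfl⟩
      have hne : l ≠ Fin.castLE hi m := by
        rintro rfl
        exact absurd hl (by simpa using m.is_le)
      simp [T.rightSingularVectors.orthonormal.inner_eq_zero hne]
    simpa [OrthonormalBasis.repr_apply_apply] using hV_le hxV
  have hle : T.singularValues i * ‖x‖ ≤ ‖toContinuousLinearMap (T - D)‖ * ‖x‖ :=
    calc T.singularValues i * ‖x‖ ≤ ‖T x‖ := T.le_norm_apply_of_repr_eq_zero hcoord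
      _ = ‖toContinuousLinearMap (T - D) x‖ := by simp [show D x = 0 by simpa using hDx]
      _ ≤ ‖toContinuousLinearMap (T - D)‖ * ‖x‖ := ContinuousLinearMap.le_opNorm _ _
  exact le_of_mul_le_mul_right hle (norm_pos_iff.mpr (by simpa using hx0))

end LinearMap

namespace Matrix

theorem rank_add_le {K m n : Type*} [Field K] [Fintype n] [Finite m] (A B : Matrix m n K) :
    (A + B).rank ≤ A.rank + B.rank := by
  rw [Matrix.rank, Matrix.rank, Matrix.rank, mulVecLin_add]
  exact (Submodule.finrank_mono (LinearMap.range_add_le _ _)).trans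
    (Submodule.finrank_add_le_finrank_add_finrank _ _)

theorem rank_eq_finrank_range_toEuclideanLin {𝕜 m n : Type*} [RCLike 𝕜] [Fintype m]
    [Fintype n] [DecidableEq n] (A : Matrix m n 𝕜) :
    A.rank = finrank 𝕜 (LinearMap.range (toEuclideanLin A : EuclideanSpace 𝕜 n →ₗ[𝕜] _)) := by
  rw [toEuclideanLin_eq_toLin_orthonormal, rank_eq_finrank_range_toLin A
    (EuclideanSpace.basisFun m 𝕜).toBasis (EuclideanSpace.basisFun n 𝕜).toBasis]

theorem l2_opNorm_submatrix_one_le {𝕜 m n : Type*} [RCLike 𝕜] [Fintype m] [DecidableEq m]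
    [Fintype n] [DecidableEq n] {e : n → m} (he : Function.Injective e) :
    ‖(1 : Matrix m m 𝕜).submatrix id e‖ ≤ 1 := by
  have h : ((1 : Matrix m m 𝕜).submatrix id e)ᴴ * (1 : Matrix m m 𝕜).submatrix id e = 1 := by
    ext p q
    simp [mul_apply, one_apply, he.eq_iff]
  have h1 : ‖(1 : Matrix n n 𝕜)‖ ≤ 1 := by
    rw [← l2_opNorm_toEuclideanCLM, map_one]
    exact ContinuousLinearMap.norm_id_le
  have := l2_opNorm_conjTranspose_mul_self ((1 : Matrix m m 𝕜).submatrix id e)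
  rw [h] at this
  nlinarith [norm_nonneg ((1 : Matrix m m 𝕜).submatrix id e)]

theorem rank_one_sub_submatrix_one_castSucc_mul_transpose_le {R : Type*} [Field R] {n : ℕ} :
    (1 - (1 : Matrix (Fin (n + 1)) (Fin (n + 1)) R).submatrix id Fin.castSucc *
      ((1 : Matrix (Fin (n + 1)) (Fin (n + 1)) R).submatrix id Fin.castSucc)ᵀ).rank ≤ 1 := by
  have h : 1 - (1 : Matrix (Fin (n + 1)) (Fin (n + 1)) R).submatrix id Fin.castSucc *
      ((1 : Matrix (Fin (n + 1)) (Fin (n + 1)) R).submatrix id Fin.castSucc)ᵀ =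
      vecMulVec (Pi.single (Fin.last n) 1) (Pi.single (Fin.last n) 1) := by
    ext p q
    induction q using Fin.lastCases <;>
      simp [mul_apply, one_apply, vecMulVec_apply, Pi.single_apply, eq_comm]
  rw [h]
  exact rank_vecMulVec_le _ _

end Matrix

section singVal

variable {a b : ℕ}

theorem specNorm_eq_norm (M : Matrix (Fin a) (Fin b) ℝ) : specNorm M = ‖M‖ := rfl

theorem singVal_nonneg (M : Matrix (Fin a) (Fin b) ℝ) (j : ℕ) : 0 ≤ singVal M j :=
  Real.sInf_nonneg fun _ ⟨_, _, hr⟩ => hr ▸ norm_nonneg _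

theorem singVal_le_norm_sub (M : Matrix (Fin a) (Fin b) ℝ) {D : Matrix (Fin a) (Fin b) ℝ} {j : ℕ}
    (hD : D.rank < j) : singVal M j ≤ ‖M - D‖ :=
  csInf_le ⟨0, fun _ ⟨_, _, hr⟩ => hr ▸ norm_nonneg _⟩ ⟨D, hD, (specNorm_eq_norm _).symm⟩

theorem isLeast_singVal (M : Matrix (Fin a) (Fin b) ℝ) {j : ℕ} (hj : 1 ≤ j) :
    IsLeast {r : ℝ | ∃ D : Matrix (Fin a) (Fin b) ℝ, D.rank < j ∧ r = specNorm (M - D)}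
      ((toEuclideanLin M).singularValues (j - 1)) := by
  have hspec : ∀ D : Matrix (Fin a) (Fin b) ℝ,
      specNorm (M - D) = ‖LinearMap.toContinuousLinearMap (toEuclideanLin M - toEuclideanLin D)‖ :=
    fun D => by rw [specNorm, map_sub]
  have hlower : ∀ D : Matrix (Fin a) (Fin b) ℝ, D.rank < j →
      (toEuclideanLin M).singularValues (j - 1) ≤ specNorm (M - D) := fun D hD => by
    rw [hspec]
    exact LinearMap.singularValues_le_opNorm_sub _ (by
      rw [← rank_eq_finrank_range_toEuclideanLin]; omega)
  obtain ⟨D, hD, hle⟩ := (toEuclideanLin M).exists_finrank_range_le_opNorm_sub_le (j - 1)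
  have hD' : (toEuclideanLin.symm D).rank < j := by
    rw [rank_eq_finrank_range_toEuclideanLin, LinearEquiv.apply_symm_apply]
    omega
  refine ⟨⟨_, hD', le_antisymm (hlower _ hD') ?_⟩, fun _ ⟨D, hD, hr⟩ => hr ▸ hlower D hD⟩
  rwa [hspec, LinearEquiv.apply_symm_apply]

theorem singVal_eq_singularValues (M : Matrix (Fin a) (Fin b) ℝ) {j : ℕ} (hj : 1 ≤ j) :
    singVal M j = (toEuclideanLin M).singularValues (j - 1) :=
  (isLeast_singVal M hj).csInf_eq

theorem exists_rank_lt_singVal_eq_norm_sub (M : Matrix (Fin a) (Fin b) ℝ) {j : ℕ} (hj : 1 ≤ j) :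
    ∃ D : Matrix (Fin a) (Fin b) ℝ, D.rank < j ∧ singVal M j = ‖M - D‖ := by
  rw [singVal_eq_singularValues M hj]
  exact (isLeast_singVal M hj).1

theorem hasEigenvalue_transpose_mul_self_sq_singVal (M : Matrix (Fin a) (Fin b) ℝ) {j : ℕ}
    (hj : 1 ≤ j) (hjb : j ≤ b) :
    Module.End.HasEigenvalue (toLin' (Mᵀ * M)) (singVal M j ^ 2) := by
  have h := (toEuclideanLin M).hasEigenvalue_adjoint_comp_self_sq_singularValues
    (n := j - 1) (by rw [finrank_euclideanSpace_fin]; omega)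
  rw [← toEuclideanLin_conjTranspose_eq_adjoint, ← toLpLin_mul_same,
    conjTranspose_eq_transpose_of_trivial, Module.End.hasEigenvalue_iff_mem_spectrum,
    spectrum_toLpLin, ← singVal_eq_singularValues M hj] at h
  rwa [Module.End.hasEigenvalue_iff_mem_spectrum, spectrum_toLin']

theorem singVal_mul_le {c : ℕ} (M : Matrix (Fin a) (Fin b) ℝ) (S : Matrix (Fin b) (Fin c) ℝ)
    (j : ℕ) : singVal (M * S) j ≤ singVal M j * ‖S‖ := by
  rcases Nat.eq_zero_or_pos j with rfl | hj
  · simp [singVal]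
  obtain ⟨D, hD, hσ⟩ := exists_rank_lt_singVal_eq_norm_sub M hj
  calc singVal (M * S) j ≤ ‖M * S - D * S‖ :=
        singVal_le_norm_sub _ ((rank_mul_le_left D S).trans_lt hD)
    _ = ‖(M - D) * S‖ := by rw [Matrix.sub_mul]
    _ ≤ ‖M - D‖ * ‖S‖ := l2_opNorm_mul _ _
    _ = singVal M j * ‖S‖ := by rw [hσ]

theorem singVal_add_le_singVal_mul {c : ℕ} (M : Matrix (Fin a) (Fin b) ℝ)
    (S : Matrix (Fin b) (Fin c) ℝ) (R : Matrix (Fin c) (Fin b) ℝ) {j r : ℕ} (hj : 1 ≤ j)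
    (hr : (1 - S * R).rank ≤ r) : singVal M (j + r) ≤ singVal (M * S) j * ‖R‖ := by
  obtain ⟨D, hD, hσ⟩ := exists_rank_lt_singVal_eq_norm_sub (M * S) hj
  have hrank : (D * R + M * (1 - S * R)).rank < j + r :=
    calc (D * R + M * (1 - S * R)).rank ≤ (D * R).rank + (M * (1 - S * R)).rank :=
          rank_add_le _ _
      _ ≤ D.rank + (1 - S * R).rank := add_le_add (rank_mul_le_left _ _) (rank_mul_le_right _ _)
      _ < j + r := by omega
  calc singVal M (j + r) ≤ ‖M - (D * R + M * (1 - S * R))‖ := singVal_le_norm_sub M hrank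
    _ = ‖(M * S - D) * R‖ := by
        rw [Matrix.mul_sub, Matrix.mul_one, Matrix.sub_mul, Matrix.mul_assoc]
        abel_nf
    _ ≤ ‖M * S - D‖ * ‖R‖ := l2_opNorm_mul _ _
    _ = singVal (M * S) j * ‖R‖ := by rw [hσ]

theorem singVal_submatrix_le {c : ℕ} (M : Matrix (Fin a) (Fin b) ℝ) {e : Fin c → Fin b}
    (he : Function.Injective e) (j : ℕ) : singVal (M.submatrix id e) j ≤ singVal M j := by
  have h := singVal_mul_le M ((1 : Matrix (Fin b) (Fin b) ℝ).submatrix id e) j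
  rw [show M * (1 : Matrix (Fin b) (Fin b) ℝ).submatrix id e = M.submatrix id e from
    mul_submatrix_one (Equiv.refl _) e M] at h
  exact h.trans (mul_le_of_le_one_right (singVal_nonneg M j) (l2_opNorm_submatrix_one_le he))

theorem singVal_succ_le_singVal_submatrix_castSucc {n : ℕ} (M : Matrix (Fin a) (Fin (n + 1)) ℝ)
    {j : ℕ} (hj : 1 ≤ j) : singVal M (j + 1) ≤ singVal (M.submatrix id Fin.castSucc) j := by
  set S := (1 : Matrix (Fin (n + 1)) (Fin (n + 1)) ℝ).submatrix id Fin.castSucc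
  have hS : ‖Sᵀ‖ ≤ 1 := by
    rw [← conjTranspose_eq_transpose_of_trivial, l2_opNorm_conjTranspose]
    exact l2_opNorm_submatrix_one_le (Fin.castSucc_injective n)
  have h := singVal_add_le_singVal_mul M S Sᵀ hj
    rank_one_sub_submatrix_one_castSucc_mul_transpose_le
  rw [show M * S = M.submatrix id Fin.castSucc from mul_submatrix_one (Equiv.refl _) _ M] at h
  exact h.trans (mul_le_of_le_one_right (singVal_nonneg _ _) hS)

end singVal

structure Matrix.IsUnreducedUpperHessenberg {R : Type*} [Zero R] {n : ℕ}
    (T : Matrix (Fin (n + 1)) (Fin (n + 1)) R) : Prop where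
  apply_eq_zero : ∀ p q : Fin (n + 1), (q : ℕ) + 1 < p → T p q = 0
  succ_castSucc_ne_zero : ∀ i : Fin n, T i.succ i.castSucc ≠ 0

namespace Matrix.IsUnreducedUpperHessenberg

theorem submatrix_castSucc {R : Type*} [Zero R] {n : ℕ} {T : Matrix (Fin (n + 2)) (Fin (n + 2)) R}
    (hT : T.IsUnreducedUpperHessenberg) :
    (T.submatrix Fin.castSucc Fin.castSucc).IsUnreducedUpperHessenberg where
  apply_eq_zero p q h := hT.apply_eq_zero _ _ h
  succ_castSucc_ne_zero i := by
    simpa [← Fin.succ_castSucc] using hT.succ_castSucc_ne_zero i.castSucc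

theorem eq_zero_of_mulVec_eq_smul {R : Type*} [CommRing R] [NoZeroDivisors R] {n : ℕ}
    {T : Matrix (Fin (n + 1)) (Fin (n + 1)) R}
    (hT : T.IsUnreducedUpperHessenberg) {μ : R} {w : Fin (n + 1) → R} (hw : T *ᵥ w = μ • w)
    (hlast : w (Fin.last n) = 0) : w = 0 := by
  -- Back substitution: row `i + 1` of `T w = μ w` forces `w i = 0` once `w` vanishes beyond `i`.
  suffices h : ∀ i : Fin (n + 1), ∀ q, i ≤ q → w q = 0 from
    funext fun q => h 0 q (Fin.zero_le q)
  intro i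
  induction i using Fin.reverseInduction with
  | last => intro q hq; rwa [Fin.last_le_iff.mp hq]
  | cast i ih =>
    have hi : w i.castSucc = 0 := by
      have hrow := congrFun hw i.succ
      rw [mulVec, dotProduct, Finset.sum_eq_single i.castSucc, Pi.smul_apply, ih i.succ le_rfl,
        smul_zero] at hrow
      · exact (mul_eq_zero.mp hrow).resolve_left (hT.succ_castSucc_ne_zero i)
      · intro q _ hq
        rcases lt_or_gt_of_ne hq with h | h
        · rw [hT.apply_eq_zero _ _ (by simp [Fin.lt_def] at h ⊢; omega), zero_mul]
        · rw [ih q (Fin.castSucc_lt_iff_succ_le.mp h), mul_zero]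
      · simp
    intro q hq
    rcases hq.lt_or_eq with h | rfl
    · exact ih q (Fin.castSucc_lt_iff_succ_le.mp h)
    · exact hi

end Matrix.IsUnreducedUpperHessenberg

theorem Matrix.IsSymm.mul_apply_last_eq_zero {R : Type*} [CommRing R] {n : ℕ}
    {T : Matrix (Fin (n + 1)) (Fin (n + 1)) R} (hT : T.IsSymm) {μ : R} {v : Fin n → R}
    {w : Fin (n + 1) → R} (hv : T.submatrix Fin.castSucc Fin.castSucc *ᵥ v = μ • v)
    (hw : T *ᵥ w = μ • w) :
    (∑ q, T (Fin.last n) q.castSucc * v q) * w (Fin.last n) = 0 := by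
  set s := ∑ q, T (Fin.last n) q.castSucc * v q
  have hTv : T *ᵥ Fin.snoc v 0 = Fin.snoc (μ • v) s := by
    ext p
    induction p using Fin.lastCases with
    | last => simp [mulVec, dotProduct, Fin.sum_univ_castSucc, s]
    | cast p => simpa [mulVec, dotProduct, Fin.sum_univ_castSucc] using congrFun hv p
  have h : w ⬝ᵥ (T *ᵥ Fin.snoc v 0) = μ * (w ⬝ᵥ Fin.snoc v 0) := by
    rw [dotProduct_mulVec, ← mulVec_transpose, hT.eq, hw, smul_dotProduct, smul_eq_mul]
  rw [hTv] at h
  simp only [dotProduct, Fin.sum_univ_castSucc, Fin.snoc_castSucc, Fin.snoc_last, Pi.smul_apply,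
    smul_eq_mul, mul_zero, add_zero, Finset.mul_sum, mul_left_comm (w _) μ] at h
  linear_combination h

theorem Matrix.IsUnreducedUpperHessenberg.not_hasEigenvalue_of_hasEigenvalue_submatrix
    {K : Type*} [Field K] {n : ℕ} {T : Matrix (Fin (n + 2)) (Fin (n + 2)) K}
    (hT : T.IsUnreducedUpperHessenberg) (hsymm : T.IsSymm) {μ : K}
    (h0 : Module.End.HasEigenvalue (toLin' (T.submatrix Fin.castSucc Fin.castSucc)) μ) :
    ¬ Module.End.HasEigenvalue (toLin' T) μ := by
  intro h
  obtain ⟨v, hv⟩ := h0.exists_hasEigenvector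
  obtain ⟨w, hw⟩ := h.exists_hasEigenvector
  have hv' : T.submatrix Fin.castSucc Fin.castSucc *ᵥ v = μ • v := by
    simpa using hv.apply_eq_smul
  have hw' : T *ᵥ w = μ • w := by simpa using hw.apply_eq_smul
  have hvlast : v (Fin.last n) ≠ 0 := fun h0 =>
    hv.2 (hT.submatrix_castSucc.eq_zero_of_mulVec_eq_smul hv' h0)
  have hwlast : w (Fin.last (n + 1)) ≠ 0 := fun h0 =>
    hw.2 (hT.eq_zero_of_mulVec_eq_smul hw' h0)
  have hs : ∑ q, T (Fin.last (n + 1)) q.castSucc * v q =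
      T (Fin.last n).succ (Fin.last n).castSucc * v (Fin.last n) := by
    rw [Fin.sum_univ_castSucc, Finset.sum_eq_zero, zero_add, Fin.succ_last]
    intro q _
    rw [hT.apply_eq_zero _ _ (by simp), zero_mul]
  have := hsymm.mul_apply_last_eq_zero hv' hw'
  rw [hs] at this
  exact mul_ne_zero (mul_ne_zero (hT.succ_castSucc_ne_zero _) hvlast) hwlast this

structure Matrix.IsUnreducedLowerBidiagonal {R : Type*} [Zero R] {n : ℕ}
    (B : Matrix (Fin (n + 1)) (Fin (n + 1)) R) : Prop where
  apply_eq_zero : ∀ p q : Fin (n + 1), (p : ℕ) ≠ q → (p : ℕ) ≠ q + 1 → B p q = 0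
  apply_self_ne_zero : ∀ i, B i i ≠ 0
  succ_castSucc_ne_zero : ∀ i : Fin n, B i.succ i.castSucc ≠ 0

theorem Matrix.IsUnreducedLowerBidiagonal.isUnreducedUpperHessenberg_transpose_mul_self
    {R : Type*} [CommRing R] [NoZeroDivisors R] {n : ℕ} {B : Matrix (Fin (n + 1)) (Fin (n + 1)) R}
    (hB : B.IsUnreducedLowerBidiagonal) : (Bᵀ * B).IsUnreducedUpperHessenberg where
  apply_eq_zero p q hpq := by
    rw [mul_apply]
    refine Finset.sum_eq_zero fun r _ => ?_
    by_cases hr : (r : ℕ) = p ∨ (r : ℕ) = p + 1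
    · rw [transpose_apply, hB.apply_eq_zero r q (by omega) (by omega), mul_zero]
    · rw [transpose_apply, hB.apply_eq_zero r p (by omega) (by omega), zero_mul]
  succ_castSucc_ne_zero i := by
    rw [mul_apply, Finset.sum_eq_single i.succ]
    · exact mul_ne_zero (hB.apply_self_ne_zero _) (hB.succ_castSucc_ne_zero i)
    · intro r _ hr
      have hr' : (r : ℕ) ≠ i + 1 := fun h => hr (Fin.ext h)
      by_cases hri : (r : ℕ) = i
      · rw [transpose_apply, hB.apply_eq_zero r i.succ (by simp; omega) (by simp; omega), zero_mul]
      · rw [hB.apply_eq_zero r i.castSucc (by simpa using hri) (by simpa using hr'), mul_zero]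
    · simp

theorem Matrix.isUnreducedLowerBidiagonal_of_appendColumn {R : Type*} [Zero R] {k : ℕ}
    {α β : Fin k → R} (hα : ∀ i, α i ≠ 0) (hβ : ∀ i, β i ≠ 0)
    {Bk : Matrix (Fin (k + 1)) (Fin k) R}
    (hBk : ∀ (i : Fin (k + 1)) (j : Fin k),
      Bk i j = if (i : ℕ) = j then α j else if (i : ℕ) = j + 1 then β j else 0)
    {αlast : R} (hαlast : αlast ≠ 0) {Bbar : Matrix (Fin (k + 1)) (Fin (k + 1)) R}
    (hcol : ∀ i j, Bbar i j.castSucc = Bk i j)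
    (hlast : ∀ i, Bbar i (Fin.last k) = if i = Fin.last k then αlast else 0) :
    Bbar.IsUnreducedLowerBidiagonal where
  apply_eq_zero p q h1 h2 := by
    induction q using Fin.lastCases with
    | last => rw [hlast, if_neg (fun h => h1 (by simp [h]))]
    | cast q => rw [hcol, hBk, if_neg (by simpa using h1), if_neg (by simpa using h2)]
  apply_self_ne_zero i := by
    induction i using Fin.lastCases with
    | last => simpa [hlast] using hαlast
    | cast i => simpa [hcol, hBk] using hα i
  succ_castSucc_ne_zero i := by simpa [hcol, hBk] using hβ i

theorem singVal_ne_singVal_submatrix_castSucc {a n : ℕ} {G : Matrix (Fin a) (Fin (n + 2)) ℝ}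
    (hG : (Gᵀ * G).IsUnreducedUpperHessenberg) {j j' : ℕ} (hj : 1 ≤ j) (hjn : j ≤ n + 1)
    (hj' : 1 ≤ j') (hj'n : j' ≤ n + 2) :
    singVal G j' ≠ singVal (G.submatrix id Fin.castSucc) j := by
  intro heq
  have hsub : (Gᵀ * G).submatrix Fin.castSucc Fin.castSucc =
      (G.submatrix id Fin.castSucc)ᵀ * G.submatrix id Fin.castSucc := by
    ext p q
    simp [mul_apply]
  refine hG.not_hasEigenvalue_of_hasEigenvalue_submatrix
    (by rw [IsSymm, transpose_mul, transpose_transpose])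
    (hsub ▸ hasEigenvalue_transpose_mul_self_sq_singVal _ hj hjn) ?_
  rw [← heq]
  exact hasEigenvalue_transpose_mul_self_sq_singVal G hj' hj'n

/-- the singular values of `B̄_{k+1} = (B_k, α_{k+1} e_{k+1})` strictly interlace
those of the positive lower bidiagonal matrix `B_k`:
`θ̄_1 > θ_1 > θ̄_2 > θ_2 > ⋯ > θ̄_k > θ_k > θ̄_{k+1}`. -/
theorem singularValues_appended_column_strictly_interlace
    (k : ℕ) (hk : 1 ≤ k)
    (α : Fin k → ℝ) (hα : ∀ i, 0 < α i)
    (β : Fin k → ℝ) (hβ : ∀ i, 0 < β i)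
    (Bk : Matrix (Fin (k + 1)) (Fin k) ℝ)
    (hBk : ∀ (i : Fin (k + 1)) (j : Fin k),
      Bk i j = if (i : ℕ) = (j : ℕ) then α j
        else if (i : ℕ) = (j : ℕ) + 1 then β j else 0)
    (αlast : ℝ) (hαlast : 0 < αlast)
    (Bbar : Matrix (Fin (k + 1)) (Fin (k + 1)) ℝ)
    (hBbar : ∀ (i j : Fin (k + 1)),
      Bbar i j = if h : (j : ℕ) < k then Bk i ⟨(j : ℕ), h⟩
        else if (i : ℕ) = k then αlast else 0) :
    ∀ i : ℕ, 1 ≤ i → i ≤ k →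
      (singVal Bk i < singVal Bbar i ∧ singVal Bbar (i + 1) < singVal Bk i) := by
  intro i hi1 hik
  obtain ⟨m, rfl⟩ : ∃ m, k = m + 1 := ⟨k - 1, by omega⟩
  have hcol : ∀ p q, Bbar p q.castSucc = Bk p q := fun p q => by
    rw [hBbar, dif_pos (show (q.castSucc : ℕ) < m + 1 from q.isLt)]
    rfl
  have hlast : ∀ p, Bbar p (Fin.last (m + 1)) = if p = Fin.last (m + 1) then αlast else 0 := by
    intro p
    simp [hBbar, Fin.ext_iff]
  have hT := (isUnreducedLowerBidiagonal_of_appendColumn (fun i => (hα i).ne')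
    (fun i => (hβ i).ne') hBk hαlast.ne' hcol hlast).isUnreducedUpperHessenberg_transpose_mul_self
  obtain rfl : Bbar.submatrix id Fin.castSucc = Bk := Matrix.ext hcol
  exact ⟨(singVal_submatrix_le Bbar (Fin.castSucc_injective _) i).lt_of_ne
      (singVal_ne_singVal_submatrix_castSucc hT hi1 hik hi1 (by omega)).symm,
    (singVal_succ_le_singVal_submatrix_castSucc Bbar hi1).lt_of_ne
      (singVal_ne_singVal_submatrix_castSucc hT hi1 hik (by omega) (by omega))⟩
end
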